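/- If for each global index l the two matrices B_i touching column l have opposite signs there (one +1, one −1), then ∑_{i=0}^N A_iᵀB_i = 0. -/
import Mathlib


open Matrix

/-- Boolean matrices `A i` with exactly one 1 per row, `B i` with the same
sparsity pattern with entries ±1; each column `l` is hit by exactly two rows overall, and
the two corresponding entries of the `B` matrices are `+1` and `-1`.
Then `∑ i, (A i)ᵀ * (B i) = 0`. -/
theorem stmt_2 (N M : ℕ) (Mi : Fin (N + 1) → ℕ)
    (A B : (i : Fin (N + 1)) → Matrix (Fin (Mi i)) (Fin M) ℝ)
    (hA : ∀ i k, ∃ l, A i k l = 1 ∧ ∀ l', l' ≠ l → A i k l' = 0)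
    (hB0 : ∀ i k l, A i k l = 0 → B i k l = 0)
    (hsigned : ∀ l : Fin M, ∃ p q : (i : Fin (N + 1)) × Fin (Mi i),
      p ≠ q ∧ A p.1 p.2 l = 1 ∧ A q.1 q.2 l = 1 ∧
      (∀ r : (i : Fin (N + 1)) × Fin (Mi i), A r.1 r.2 l = 1 → r = p ∨ r = q) ∧
      B p.1 p.2 l = 1 ∧ B q.1 q.2 l = -1) :
    ∑ i, (A i)ᵀ * B i = 0 := by
  -- A entries are 0 or 1
  have hA01 : ∀ i k l, A i k l = 0 ∨ A i k l = 1 := by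
    intro i k l
    obtain ⟨l0, h1, h0⟩ := hA i k
    by_cases h : l = l0
    · right; rw [h]; exact h1
    · left; exact h0 l h
  ext l m
  simp only [Matrix.sum_apply, Matrix.mul_apply, Matrix.transpose_apply, Matrix.zero_apply]
  obtain ⟨p, q, hpq, hAp, hAq, huniq, hBp, hBq⟩ := hsigned l
  rw [Finset.sum_sigma', Finset.univ_sigma_univ]
  have hsum : ∑ r : (i : Fin (N + 1)) × Fin (Mi i), A r.1 r.2 l * B r.1 r.2 m
      = A p.1 p.2 l * B p.1 p.2 m + A q.1 q.2 l * B q.1 q.2 m := by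
    refine Fintype.sum_eq_add p q hpq ?_
    rintro r ⟨hrp, hrq⟩
    rcases hA01 r.1 r.2 l with h | h
    · rw [h, zero_mul]
    · rcases huniq r h with rfl | rfl
      · exact absurd rfl hrp
      · exact absurd rfl hrq
  rw [hsum, hAp, hAq, one_mul, one_mul]
  by_cases hm : m = l
  · subst hm; rw [hBp, hBq]; ring
  · have hzp : A p.1 p.2 m = 0 := by
      obtain ⟨l0, h1, h0⟩ := hA p.1 p.2
      have : l = l0 := by
        by_contra h
        rw [h0 l h] at hAp; norm_num at hAp
      subst this; exact h0 m hm
    have hzq : A q.1 q.2 m = 0 := by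
      obtain ⟨l0, h1, h0⟩ := hA q.1 q.2
      have : l = l0 := by
        by_contra h
        rw [h0 l h] at hAq; norm_num at hAq
      subst this; exact h0 m hm
    rw [hB0 _ _ _ hzp, hB0 _ _ _ hzq]; ring
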